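/- arXiv:2503.11773 — 2 statements merged into one kernel-verified Lean document; each statement's English description precedes it below -/
import Mathlib

section
/- Let n ≥ 1, let a_1, …, a_n be positive reals and d ≥ 0. Then the function f(x) = 1 / (∑_{i=1}^n a_i / x_i + d), defined for x ∈ ℝ^n with all coordinates positive, is concave on the positive orthant. -/
open Finset

private lemma keylem (l m u1 v1 u2 v2 : ℝ) (hl : 0 < l) (hm : 0 < m)
    (hu1 : 0 < u1) (hv1 : 0 < v1)
    (h2 : (0 < u2 ∧ 0 < v2) ∨ (u2 = 0 ∧ v2 = 0)) :
    u1 * v1 / (l * v1 + m * u1) + u2 * v2 / (l * v2 + m * u2) ≤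
      (u1 + u2) * (v1 + v2) / (l * (v1 + v2) + m * (u1 + u2)) := by
  rcases h2 with ⟨hu2, hv2⟩ | ⟨rfl, rfl⟩
  · have d1 : 0 < l * v1 + m * u1 := by positivity
    have d2 : 0 < l * v2 + m * u2 := by positivity
    have d3 : 0 < l * (v1 + v2) + m * (u1 + u2) := by positivity
    rw [div_add_div _ _ d1.ne' d2.ne', div_le_div_iff₀ (by positivity) d3]
    nlinarith [mul_nonneg (mul_nonneg hl.le hm.le) (sq_nonneg (u1 * v2 - u2 * v1)),
      mul_pos d1 d2, mul_pos hu1 hv1, mul_pos hu2 hv2]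
  · simp

private lemma sumlem {ι : Type*} (l m : ℝ) (hl : 0 < l) (hm : 0 < m)
    (u v : ι → ℝ) (s : Finset ι) (hu : ∀ i ∈ s, 0 < u i) (hv : ∀ i ∈ s, 0 < v i) :
    ∑ i ∈ s, u i * v i / (l * v i + m * u i) ≤
      (∑ i ∈ s, u i) * (∑ i ∈ s, v i) /
        (l * (∑ i ∈ s, v i) + m * (∑ i ∈ s, u i)) := by
  induction s using Finset.cons_induction with
  | empty => simp
  | cons i s hi ih =>
    have hui : 0 < u i := hu i (Finset.mem_cons_self i s)
    have hvi : 0 < v i := hv i (Finset.mem_cons_self i s)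
    have hu' : ∀ j ∈ s, 0 < u j := fun j hj => hu j (Finset.mem_cons_of_mem hj)
    have hv' : ∀ j ∈ s, 0 < v j := fun j hj => hv j (Finset.mem_cons_of_mem hj)
    rw [Finset.sum_cons, Finset.sum_cons, Finset.sum_cons]
    have h2 : (0 < ∑ j ∈ s, u j ∧ 0 < ∑ j ∈ s, v j) ∨
        ((∑ j ∈ s, u j) = 0 ∧ (∑ j ∈ s, v j) = 0) := by
      rcases s.eq_empty_or_nonempty with rfl | hs
      · right; simp
      · left; exact ⟨Finset.sum_pos hu' hs, Finset.sum_pos hv' hs⟩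
    calc u i * v i / (l * v i + m * u i) + ∑ j ∈ s, u j * v j / (l * v j + m * u j)
        ≤ u i * v i / (l * v i + m * u i) +
          (∑ j ∈ s, u j) * (∑ j ∈ s, v j) /
            (l * (∑ j ∈ s, v j) + m * (∑ j ∈ s, u j)) := by
          exact add_le_add_right (ih hu' hv') _
      _ ≤ _ := keylem l m (u i) (v i) _ _ hl hm hui hvi h2

theorem stmt0 (n : ℕ) (hn : 1 ≤ n) (a : Fin n → ℝ) (ha : ∀ i, 0 < a i)
    (d : ℝ) (hd : 0 ≤ d) :
    ConcaveOn ℝ {x : Fin n → ℝ | ∀ i, 0 < x i}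
      (fun x => (∑ i, a i / x i + d)⁻¹) := by
  have hne : Nonempty (Fin n) := Fin.pos_iff_nonempty.mp hn
  constructor
  · intro x hx y hy l m hl hm hlm
    intro i
    simp only [Pi.add_apply, Pi.smul_apply, smul_eq_mul]
    rcases hl.eq_or_lt with h | h
    · have hm1 : m = 1 := by linarith
      simp [← h, hm1, hy i]
    · exact add_pos_of_pos_of_nonneg (mul_pos h (hx i)) (mul_nonneg hm (hy i).le)
  · intro x hx y hy l m hl hm hlm
    simp only [Set.mem_setOf_eq] at hx hy
    rcases hl.eq_or_lt with h | hl'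
    · have hm1 : m = 1 := by linarith
      simp [← h, hm1]
    rcases hm.eq_or_lt with h | hm'
    · have hl1 : l = 1 := by linarith
      simp [← h, hl1]
    simp only [smul_eq_mul, Pi.add_apply, Pi.smul_apply]
    set u : Fin n → ℝ := fun i => a i / x i with hu_def
    set v : Fin n → ℝ := fun i => a i / y i with hv_def
    have hu : ∀ i, 0 < u i := fun i => div_pos (ha i) (hx i)
    have hv : ∀ i, 0 < v i := fun i => div_pos (ha i) (hy i)
    have hz : ∀ i, a i / (l * x i + m * y i) = u i * v i / (l * v i + m * u i) := by
      intro i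
      rw [hu_def, hv_def]
      have hai := ha i
      have hxi := hx i
      have hyi := hy i
      have h1 := (hx i).ne'
      have h2 := (hy i).ne'
      have h3 : (l * (a i / y i) + m * (a i / x i)) ≠ 0 := by positivity
      have h4 : (l * x i + m * y i) ≠ 0 := by positivity
      rw [div_eq_div_iff h4 h3]
      field_simp
    set U : ℝ := ∑ i, u i with hU_def
    set V : ℝ := ∑ i, v i with hV_def
    have hUpos : 0 < U := Finset.sum_pos (fun i _ => hu i) Finset.univ_nonempty
    have hVpos : 0 < V := Finset.sum_pos (fun i _ => hv i) Finset.univ_nonempty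
    have hsum : ∑ i, u i * v i / (l * v i + m * u i) ≤ U * V / (l * V + m * U) :=
      sumlem l m hl' hm' u v Finset.univ (fun i _ => hu i) (fun i _ => hv i)
    have hdd : d * d / (l * d + m * d) = d := by
      rcases hd.eq_or_lt with h | h
      · simp [← h]
      · rw [show l * d + m * d = d by rw [← add_mul, hlm, one_mul],
          mul_div_assoc, div_self h.ne', mul_one]
    have step2 : U * V / (l * V + m * U) + d ≤
        (U + d) * (V + d) / (l * (V + d) + m * (U + d)) := by
      have h2 : (0 < d ∧ 0 < d) ∨ (d = 0 ∧ d = 0) := by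
        rcases hd.eq_or_lt with h | h
        · right; exact ⟨h.symm, h.symm⟩
        · left; exact ⟨h, h⟩
      have := keylem l m U V d d hl' hm' hUpos hVpos h2
      rw [hdd] at this
      exact this
    have hA : 0 < U + d := add_pos_of_pos_of_nonneg hUpos hd
    have hB : 0 < V + d := add_pos_of_pos_of_nonneg hVpos hd
    have hmain : ∑ i, a i / (l * x i + m * y i) + d ≤
        (U + d) * (V + d) / (l * (V + d) + m * (U + d)) := by
      calc ∑ i, a i / (l * x i + m * y i) + d
          = (∑ i, u i * v i / (l * v i + m * u i)) + d := by
            rw [Finset.sum_congr rfl (fun i _ => hz i)]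
        _ ≤ U * V / (l * V + m * U) + d := by linarith
        _ ≤ _ := step2
    have hzpos : 0 < ∑ i, a i / (l * x i + m * y i) + d := by
      have : 0 < ∑ i, a i / (l * x i + m * y i) :=
        Finset.sum_pos (fun i _ => div_pos (ha i)
          (add_pos (mul_pos hl' (hx i)) (mul_pos hm' (hy i)))) Finset.univ_nonempty
      linarith
    have hABd : 0 < l * (V + d) + m * (U + d) := add_pos (mul_pos hl' hB) (mul_pos hm' hA)
    calc l * (∑ i, a i / x i + d)⁻¹ + m * (∑ i, a i / y i + d)⁻¹
        = l * (U + d)⁻¹ + m * (V + d)⁻¹ := by rw [hU_def, hV_def]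
      _ = (l * (V + d) + m * (U + d)) / ((U + d) * (V + d)) := by
          field_simp
      _ = ((U + d) * (V + d) / (l * (V + d) + m * (U + d)))⁻¹ := by
          rw [inv_div]
      _ ≤ (∑ i, a i / (l * x i + m * y i) + d)⁻¹ := by
          apply inv_anti₀ hzpos hmain
end

section
/- Let g_i > 0 and δ_i ≠ 0 for i = 1,…,K. Consider maximizing z subject to δ_i^2 / (∑_{s=1}^S g_{is}/n_s) ≥ z for all i and ∑_{s∈S_j} c_s n_s = U_j for a partition {S_j} of {1,…,S}, with c_s > 0, U_j > 0, n ≥ 0, and assume for every s there exists i with g_{is} > 0. Then every optimal solution n* satisfies n*_s > 0 for all s. -/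
open Finset ENNReal

theorem stmt2 (K S D : ℕ) (hK : 0 < K)
    (δ : Fin K → ℝ) (hδ : ∀ i, δ i ≠ 0)
    (g : Fin K → Fin S → ℝ) (hg0 : ∀ i s, 0 ≤ g i s)
    (hg : ∀ s, ∃ i, 0 < g i s)
    (c : Fin S → ℝ) (hc : ∀ s, 0 < c s)
    (P : Fin S → Fin D) (U : Fin D → ℝ) (hU : ∀ j, 0 < U j)
    (obj : (Fin S → ℝ) → ℝ≥0∞)
    (hobj : obj = fun nv => ⨅ i : Fin K,
      if ∃ s, 0 < g i s ∧ nv s = 0 then 0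
      else ENNReal.ofReal (δ i ^ 2) / ENNReal.ofReal (∑ s, g i s / nv s))
    (nstar : Fin S → ℝ)
    (hfeas : (∀ s, 0 ≤ nstar s) ∧
      ∀ j, ∑ s ∈ Finset.univ.filter (fun s => P s = j), c s * nstar s = U j)
    (hopt : ∀ nv : Fin S → ℝ, (∀ s, 0 ≤ nv s) →
      (∀ j, ∑ s ∈ Finset.univ.filter (fun s => P s = j), c s * nv s = U j) →
      obj nv ≤ obj nstar) :
    ∀ s, 0 < nstar s := by
  subst hobj
  by_contra h
  push_neg at h
  obtain ⟨s0, hs0⟩ := h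
  have hs0' : nstar s0 = 0 := le_antisymm hs0 (hfeas.1 s0)
  -- every fiber of P is nonempty
  have hfib : ∀ j, (Finset.univ.filter (fun s => P s = j)).Nonempty := by
    intro j
    by_contra hne
    rw [Finset.not_nonempty_iff_eq_empty] at hne
    have := hfeas.2 j
    rw [hne, Finset.sum_empty] at this
    exact absurd this.symm (ne_of_gt (hU j))
  set m : Fin D → ℕ := fun j => (Finset.univ.filter (fun s => P s = j)).card with hm'
  have hm : ∀ j, 0 < m j := fun j => Finset.card_pos.mpr (hfib j)
  set nv : Fin S → ℝ := fun s => U (P s) / (c s * m (P s)) with hnv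
  have hnvpos : ∀ s, 0 < nv s := fun s =>
    div_pos (hU _) (mul_pos (hc s) (Nat.cast_pos.mpr (hm _)))
  have hfeasnv : ∀ j, ∑ s ∈ Finset.univ.filter (fun s => P s = j), c s * nv s = U j := by
    intro j
    have heq : ∀ s ∈ Finset.univ.filter (fun s => P s = j), c s * nv s = U j / m j := by
      intro s hs
      simp only [Finset.mem_filter] at hs
      rw [hnv]
      simp only [hs.2]
      have := (hc s).ne'
      have := (Nat.cast_pos (α := ℝ)).mpr (hm j) |>.ne'
      field_simp
    rw [Finset.sum_congr rfl heq, Finset.sum_const, nsmul_eq_mul]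
    have := (Nat.cast_pos (α := ℝ)).mpr (hm j) |>.ne'
    field_simp
    exact mul_comm _ _
  have hle := hopt nv (fun s => (hnvpos s).le) hfeasnv
  dsimp only at hle
  -- obj nstar = 0
  obtain ⟨i0, hi0⟩ := hg s0
  have h0 : (⨅ i : Fin K, if ∃ s, 0 < g i s ∧ nstar s = 0 then 0
      else ENNReal.ofReal (δ i ^ 2) / ENNReal.ofReal (∑ s, g i s / nstar s)) = 0 := by
    refine le_antisymm (iInf_le_of_le i0 ?_) zero_le
    rw [if_pos ⟨s0, hi0, hs0'⟩]
  rw [h0] at hle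
  -- each term of obj nv is positive
  have hpos : ∀ i : Fin K, (0:ℝ≥0∞) < if ∃ s, 0 < g i s ∧ nv s = 0 then 0
      else ENNReal.ofReal (δ i ^ 2) / ENNReal.ofReal (∑ s, g i s / nv s) := by
    intro i
    rw [if_neg]
    · apply ENNReal.div_pos
      · rw [Ne, ENNReal.ofReal_eq_zero, not_le]
        have := hδ i
        positivity
      · exact ENNReal.ofReal_ne_top
    · rintro ⟨s, _, hz⟩
      exact absurd hz (ne_of_gt (hnvpos s))
  -- infimum over finite nonempty type of positive terms is positive
  haveI : Nonempty (Fin K) := ⟨⟨0, hK⟩⟩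
  obtain ⟨imin, himin⟩ := Finite.exists_min (fun i : Fin K =>
    if ∃ s, 0 < g i s ∧ nv s = 0 then 0
    else ENNReal.ofReal (δ i ^ 2) / ENNReal.ofReal (∑ s, g i s / nv s))
  have hinf : (0:ℝ≥0∞) < ⨅ i : Fin K, if ∃ s, 0 < g i s ∧ nv s = 0 then 0
      else ENNReal.ofReal (δ i ^ 2) / ENNReal.ofReal (∑ s, g i s / nv s) :=
    lt_of_lt_of_le (hpos imin) (le_iInf himin)
  exact absurd hle (not_le.mpr hinf)
end
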